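/- arXiv:2008.10035 — 2 statements merged into one kernel-verified Lean document; each statement's English description precedes it below -/
import Mathlib

section
/- Let n ≥ 5 and let Γ be the graph with vertex set {λ_{i,j} : 1 ≤ i < j ≤ n} and edges between λ_{i,j} and λ_{k,l} exactly when {i,j} ∩ {k,l} = ∅. Then for every vertex v, the induced subgraph on the complement of st(v) is connected. -/
/-!
If `v = λ_{i,j}`, the vertices outside `st(v)` are the `λ_{e,c}` with `e ∈ {i, j}` and
`c ∉ {i, j}`, and two of them are adjacent exactly when both their `e`'s and their `c`'s differ.
So the induced graph is the crown graph `K_2 × K_{n-2}`, which is connected as soon as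
`n - 2 ≥ 3`: two vertices with the same `e` are joined through a vertex with the other `e` and
a third `c`.
-/

namespace VTG

/-- Vertices `λ_{i,j}`, `1 ≤ i < j ≤ n`, indexed by pairs of `Fin n`. -/
abbrev Vtx (n : ℕ) := {p : Fin n × Fin n // p.1 < p.2}

/-- Two vertices `λ_{i,j}` and `λ_{k,l}` have disjoint index sets, i.e. `i,j,k,l` are
four distinct integers. -/
abbrev DisjV {n : ℕ} (p q : Vtx n) : Prop :=
  p.1.1 ≠ q.1.1 ∧ p.1.1 ≠ q.1.2 ∧ p.1.2 ≠ q.1.1 ∧ p.1.2 ≠ q.1.2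

open scoped commutatorElement in
/-- The right-angled Artin relations for `PVT_n`: the generators `λ_{i,j}` and `λ_{k,l}`
commute whenever `i, j, k, l` are four distinct integers. -/
def raagRels (n : ℕ) : Set (FreeGroup (Vtx n)) :=
  { w | ∃ p q : Vtx n, DisjV p q ∧ w = ⁅FreeGroup.of p, FreeGroup.of q⁆ }

/-- The graph of `PVT_n`: vertices are the generators `λ_{i,j}`, joined by an edge exactly
when the index sets are disjoint (i.e. the generators commute). -/
def Γ (n : ℕ) : SimpleGraph (Vtx n) := SimpleGraph.fromRel (fun p q => DisjV p q)

end VTG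

theorem exists_ne_ne_of_three_le_card {α : Type*} [Finite α] (h : 3 ≤ Nat.card α) (c d : α) :
    ∃ x, x ≠ c ∧ x ≠ d := by
  by_contra! H
  have hsub : (Set.univ : Set α) ⊆ {c, d} := fun x _ => by
    by_cases hx : x = c
    · exact Or.inl hx
    · exact Or.inr (H x hx)
  have := (Set.ncard_le_ncard hsub).trans (Set.ncard_insert_le c {d})
  rw [Set.ncard_univ, Set.ncard_singleton] at this
  omega

namespace SimpleGraph

/-- The tensor product `K_β × K_α` of two complete graphs (the crown graph when `β` has two
elements). -/
def completeTensor (β α : Type*) : SimpleGraph (β × α) where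
  Adj x y := x.1 ≠ y.1 ∧ x.2 ≠ y.2
  symm := ⟨fun _ _ h => ⟨h.1.symm, h.2.symm⟩⟩
  loopless := ⟨fun _ h => h.1 rfl⟩

theorem completeTensor_adj {β α : Type*} {x y : β × α} :
    (completeTensor β α).Adj x y ↔ x.1 ≠ y.1 ∧ x.2 ≠ y.2 :=
  Iff.rfl

section completeTensor

variable {β α : Type*} [Nontrivial β] [Finite α] (hα : 3 ≤ Nat.card α)
include hα

theorem completeTensor_reachable_of_ne (s t : β) {c d : α} (hcd : c ≠ d) :
    (completeTensor β α).Reachable (s, c) (t, d) := by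
  by_cases hst : s = t
  · subst hst
    obtain ⟨u, hus⟩ := exists_ne s
    obtain ⟨x, hxc, hxd⟩ := exists_ne_ne_of_three_le_card hα c d
    have h₁ : (completeTensor β α).Adj (s, c) (u, x) := completeTensor_adj.2 ⟨hus.symm, hxc.symm⟩
    have h₂ : (completeTensor β α).Adj (u, x) (s, d) := completeTensor_adj.2 ⟨hus, hxd⟩
    exact h₁.reachable.trans h₂.reachable
  · exact (completeTensor_adj.2 ⟨hst, hcd⟩).reachable

theorem completeTensor_connected : (completeTensor β α).Connected := by
  have : Nonempty α := Nat.card_pos_iff.1 (by omega) |>.1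
  refine ⟨fun ⟨s, c⟩ ⟨t, d⟩ => ?_⟩
  by_cases hcd : c = d
  · subst hcd
    obtain ⟨x, hx, -⟩ := exists_ne_ne_of_three_le_card hα c c
    exact (completeTensor_reachable_of_ne hα s t hx.symm).trans
      (completeTensor_reachable_of_ne hα t t hx)
  · exact completeTensor_reachable_of_ne hα s t hcd

end completeTensor

end SimpleGraph

namespace VTG

open SimpleGraph

variable {n : ℕ}

def indices (p : Vtx n) : Finset (Fin n) := {p.1.1, p.1.2}

theorem card_indices (p : Vtx n) : (indices p).card = 2 := Finset.card_pair p.2.ne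

theorem indices_injective : Function.Injective (indices (n := n)) := by
  intro p q h
  have h' : ({p.1.1, p.1.2} : Set (Fin n)) = {q.1.1, q.1.2} := by
    simpa [indices] using congrArg (fun s : Finset (Fin n) => (s : Set (Fin n))) h
  rcases Set.pair_eq_pair_iff.1 h' with ⟨h₁, h₂⟩ | ⟨h₁, h₂⟩
  · exact Subtype.ext (Prod.ext h₁ h₂)
  · exact absurd (h₁ ▸ h₂ ▸ q.2) (lt_asymm p.2)

theorem exists_indices_eq_pair {w : Vtx n} {e : Fin n} (he : e ∈ indices w) :
    ∃ c, indices w = {e, c} := by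
  simp only [indices, Finset.mem_insert, Finset.mem_singleton] at he
  rcases he with rfl | rfl
  exacts [⟨w.1.2, rfl⟩, ⟨w.1.1, Finset.pair_comm _ _⟩]

theorem disjV_iff {p q : Vtx n} : DisjV p q ↔ Disjoint (indices p) (indices q) := by
  simp only [DisjV, indices, Finset.disjoint_insert_left, Finset.disjoint_insert_right,
    Finset.disjoint_singleton, Finset.mem_insert, Finset.mem_singleton, not_or]
  tauto

theorem Γ_adj_iff {p q : Vtx n} : (Γ n).Adj p q ↔ Disjoint (indices p) (indices q) := by
  simp only [Γ, fromRel_adj, disjV_iff, disjoint_comm, or_self,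
    and_iff_right_iff_imp]
  rintro h rfl
  simpa [card_indices] using congrArg Finset.card (disjoint_self.1 h)

def ofNe {i j : Fin n} (h : i ≠ j) : Vtx n :=
  if hij : i < j then ⟨(i, j), hij⟩ else ⟨(j, i), h.symm.lt_of_le (not_lt.1 hij)⟩

theorem indices_ofNe {i j : Fin n} (h : i ≠ j) : indices (ofNe h) = {i, j} := by
  unfold ofNe; split <;> simp [indices, Finset.pair_comm]

def starCompl (v : Vtx n) : Set (Vtx n) := {w | w ≠ v ∧ ¬ (Γ n).Adj v w}

theorem mem_starCompl_iff {v w : Vtx n} :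
    w ∈ starCompl v ↔ ∃ e ∈ indices v, ∃ c ∉ indices v, indices w = {e, c} := by
  simp only [starCompl, Set.mem_ofPred_eq, Γ_adj_iff, Finset.not_disjoint_iff]
  constructor
  · rintro ⟨hwv, e, hev, hew⟩
    obtain ⟨c, hw⟩ := exists_indices_eq_pair hew
    refine ⟨e, hev, c, fun hcv => hwv (indices_injective ?_), hw⟩
    refine Finset.eq_of_subset_of_card_le ?_ (by rw [card_indices, card_indices])
    rw [hw]
    exact Finset.insert_subset hev (Finset.singleton_subset_iff.2 hcv)
  · rintro ⟨e, hev, c, hcv, hw⟩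
    refine ⟨?_, e, hev, by simp [hw]⟩
    rintro rfl
    exact hcv (by simp [hw])

def toStarCompl (v : Vtx n) :
    completeTensor (indices v) {c // c ∉ indices v} →g (Γ n).induce (starCompl v) where
  toFun x := ⟨ofNe (ne_of_mem_of_not_mem x.1.2 x.2.2),
    mem_starCompl_iff.2 ⟨x.1, x.1.2, x.2, x.2.2, indices_ofNe _⟩⟩
  map_rel' {x y} h := by
    obtain ⟨h₁, h₂⟩ := completeTensor_adj.1 h
    simp only [comap_adj, Function.Embedding.subtype_apply, Γ_adj_iff, indices_ofNe,
      Finset.disjoint_insert_left, Finset.disjoint_singleton_left, Finset.mem_insert,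
      Finset.mem_singleton, not_or]
    exact ⟨⟨Subtype.coe_ne_coe.2 h₁, ne_of_mem_of_not_mem x.1.2 y.2.2⟩,
      (ne_of_mem_of_not_mem y.1.2 x.2.2).symm, Subtype.coe_ne_coe.2 h₂⟩

theorem toStarCompl_surjective (v : Vtx n) : Function.Surjective (toStarCompl v) := by
  rintro ⟨w, hw⟩
  obtain ⟨e, hev, c, hcv, hw⟩ := mem_starCompl_iff.1 hw
  refine ⟨(⟨e, hev⟩, ⟨c, hcv⟩), Subtype.ext (indices_injective ?_)⟩
  simp [toStarCompl, indices_ofNe, hw]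

/-- For `n ≥ 5`, for every vertex `v` of the graph `Γ` of `PVT_n`, the induced subgraph
on the complement of the star `st(v)` is connected. -/
theorem st_complement_connected (n : ℕ) (hn : 5 ≤ n) (v : Vtx n) :
    ((Γ n).induce {w : Vtx n | w ≠ v ∧ ¬ (Γ n).Adj v w}).Connected := by
  have : Nontrivial (indices v) := Fintype.one_lt_card_iff_nontrivial.1 (by simp [card_indices])
  have hcard : 3 ≤ Nat.card {c // c ∉ indices v} := by simp [card_indices]; omega
  exact (completeTensor_connected hcard).map (toStarCompl v) (toStarCompl_surjective v)

end VTG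
end

section
/- Let n ≥ 5 and let Γ be the graph with vertex set {λ_{i,j} : 1 ≤ i < j ≤ n} and edges between λ_{i,j} and λ_{k,l} exactly when {i,j} ∩ {k,l} = ∅. Then no vertex dominates another: for distinct vertices v, w, the link lk(v) is not contained in st(w). -/
namespace VTG

variable {n : ℕ}

def support (p : Vtx n) : Finset (Fin n) := {p.1.1, p.1.2}

theorem mem_support {p : Vtx n} {x : Fin n} : x ∈ support p ↔ x = p.1.1 ∨ x = p.1.2 := by
  simp [support]

theorem card_support (p : Vtx n) : (support p).card = 2 :=
  Finset.card_pair p.2.ne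

theorem support_injective : Function.Injective (support (n := n)) := by
  rintro ⟨⟨a, b⟩, hab⟩ ⟨⟨c, d⟩, hcd⟩ h
  have hc : c ∈ support ⟨(a, b), hab⟩ := h ▸ mem_support.2 (Or.inl rfl)
  have hd : d ∈ support ⟨(a, b), hab⟩ := h ▸ mem_support.2 (Or.inr rfl)
  rw [mem_support] at hc hd
  simp only at hab hcd hc hd
  simp only [Subtype.mk.injEq, Prod.mk.injEq]
  omega

theorem exists_support_eq {x y : Fin n} (hxy : x ≠ y) : ∃ u : Vtx n, support u = {x, y} := by
  rcases hxy.lt_or_gt with h | h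
  · exact ⟨⟨(x, y), h⟩, rfl⟩
  · exact ⟨⟨(y, x), h⟩, Finset.pair_comm y x⟩

theorem adj_iff_disjoint {p q : Vtx n} : (Γ n).Adj p q ↔ Disjoint (support p) (support q) := by
  have hdisj : DisjV p q ↔ Disjoint (support p) (support q) := by
    simp only [support, Finset.disjoint_insert_left, Finset.disjoint_insert_right,
      Finset.disjoint_singleton, Finset.mem_insert, Finset.mem_singleton]
    tauto
  rw [Γ, SimpleGraph.fromRel_adj, ← hdisj]
  refine ⟨fun ⟨_, h⟩ => h.elim id fun h => ⟨h.1.symm, h.2.2.1.symm, h.2.1.symm, h.2.2.2.symm⟩,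
    fun h => ⟨fun hpq => h.1 (congrArg (·.1.1) hpq), Or.inl h⟩⟩

theorem exists_mem_support_notMem_support {v w : Vtx n} (hvw : v ≠ w) :
    ∃ x ∈ support w, x ∉ support v := by
  by_contra! h
  exact hvw (support_injective
    (Finset.eq_of_subset_of_card_le h (by rw [card_support, card_support])).symm)

theorem exists_notMem_support_of_five_le (hn : 5 ≤ n) (v w : Vtx n) :
    ∃ e, e ∉ support v ∧ e ∉ support w := by
  have hcard : (support v ∪ support w).card < (Finset.univ : Finset (Fin n)).card := by
    have := Finset.card_union_le (support v) (support w)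
    rw [card_support, card_support] at this
    rw [Finset.card_univ, Fintype.card_fin]
    omega
  obtain ⟨e, -, he⟩ := Finset.exists_mem_notMem_of_card_lt_card hcard
  exact ⟨e, Finset.notMem_union.1 he⟩

/-- Pick `x ∈ w \ v` and `e ∉ v ∪ w`; then `λ_{x,e}` lies in the link of `v` but not in the
star of `w`. -/
theorem no_domination (n : ℕ) (hn : 5 ≤ n) (v w : Vtx n) (hvw : v ≠ w) :
    ¬ (∀ u : Vtx n, (Γ n).Adj v u → (u = w ∨ (Γ n).Adj w u)) := by
  intro hdom
  obtain ⟨x, hxw, hxv⟩ := exists_mem_support_notMem_support hvw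
  obtain ⟨e, hev, hew⟩ := exists_notMem_support_of_five_le hn v w
  have hxe : x ≠ e := by rintro rfl; exact hew hxw
  obtain ⟨u, hu⟩ := exists_support_eq hxe
  have hvu : (Γ n).Adj v u := by
    rw [adj_iff_disjoint, hu, Finset.disjoint_insert_right, Finset.disjoint_singleton_right]
    exact ⟨hxv, hev⟩
  rcases hdom u hvu with rfl | hwu
  · exact hew (hu ▸ Finset.mem_insert_of_mem (Finset.mem_singleton_self e))
  · rw [adj_iff_disjoint, hu] at hwu
    exact Finset.disjoint_left.1 hwu hxw (Finset.mem_insert_self x {e})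

end VTG
end
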